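/- Let 𝔸 and 𝔹 be categories with finite limits, V : 𝔸 → 𝔹 a faithful functor preserving finite limits, and p : V×V×V → V a V-Mal'tsev operation. Let (A, s, t) and (A', s', t') be objects of 𝔸 with endomorphisms satisfying s∘t = t, t∘s = s, s'∘t' = t', t'∘s' = s'. Let τ : A' → A be a morphism with s∘τ∘s' = s∘τ and t∘τ∘t' = t∘τ, and let φ : A' → A be a morphism satisfying V(φ) = p_A⟨V(s∘τ∘t'), V(τ∘t'), V(τ)⟩ (the domain of the 2-cell τ). Then s∘φ = s∘τ, φ∘s' = s∘φ, and t∘φ = φ∘t'; in particular φ is a morphism (A',s',t') → (A,s,t) commuting with the endomorphism pairs. -/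

import Mathlib

open CategoryTheory CategoryTheory.Limits

/-- A `V`-Mal'tsev operation: a natural transformation `p : V×V×V → V` whose
components `p_A : V(A) × V(A) × V(A) ⟶ V(A)` satisfy
`p_A ∘ ⟨x,y,y⟩ = x = p_A ∘ ⟨y,y,x⟩`. -/
structure VMaltsevOperation {𝔸 𝔹 : Type*} [Category 𝔸] [Category 𝔹]
    [HasFiniteLimits 𝔹] (V : 𝔸 ⥤ 𝔹) where
  app : ∀ A : 𝔸, (V.obj A ⨯ V.obj A ⨯ V.obj A) ⟶ V.obj A
  naturality : ∀ {A A' : 𝔸} (f : A ⟶ A'),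
    prod.map (V.map f) (prod.map (V.map f) (V.map f)) ≫ app A' = app A ≫ V.map f
  maltsev_left : ∀ {T : 𝔹} {A : 𝔸} (x y : T ⟶ V.obj A),
    prod.lift x (prod.lift y y) ≫ app A = x
  maltsev_right : ∀ {T : 𝔹} {A : 𝔸} (x y : T ⟶ V.obj A),
    prod.lift y (prod.lift y x) ≫ app A = x

/-- The Mal'tsev operation applied to three generalized elements `x, y, z : T ⟶ V(A)`:
`p_A ∘ ⟨x, y, z⟩`. -/
noncomputable def VMaltsevOperation.papp {𝔸 𝔹 : Type*} [Category 𝔸] [Category 𝔹]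
    [HasFiniteLimits 𝔹] {V : 𝔸 ⥤ 𝔹} (p : VMaltsevOperation V)
    {T : 𝔹} {A : 𝔸} (x y z : T ⟶ V.obj A) : T ⟶ V.obj A :=
  prod.lift x (prod.lift y z) ≫ p.app A

/-- Property (P1) for a triple `(A, s, t)`: for all `α, β, γ : X ⟶ A` with
`s∘α = s∘β` and `t∘β = t∘γ` there is a unique `φ : X ⟶ A` with
`V(φ) = p_A ∘ ⟨V(α), V(β), V(γ)⟩`. -/
def PropertyP1 {𝔸 𝔹 : Type*} [Category 𝔸] [Category 𝔹]
    [HasFiniteLimits 𝔹] {V : 𝔸 ⥤ 𝔹} (p : VMaltsevOperation V)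
    {A : 𝔸} (s t : A ⟶ A) : Prop :=
  ∀ (X : 𝔸) (α β γ : X ⟶ A), α ≫ s = β ≫ s → β ≫ t = γ ≫ t →
    ∃! φ : X ⟶ A, V.map φ = p.papp (V.map α) (V.map β) (V.map γ)

/-! The three equations are checked after applying the faithful functor `V`: naturality of `p`
moves `s`, `t`, `s'`, `t'` inside the Mal'tsev term, the idempotence relations collapse it to
the shape `p⟨x, y, y⟩` or `p⟨y, y, x⟩`, and the Mal'tsev identities evaluate it. -/

lemma comp_self_of_comp_eq {C : Type*} [Category C] {X : C} {s t : X ⟶ X}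
    (hst : t ≫ s = t) (hts : s ≫ t = s) : s ≫ s = s := by
  calc s ≫ s = (s ≫ t) ≫ s := by rw [hts]
    _ = s := by rw [Category.assoc, hst, hts]

namespace VMaltsevOperation

variable {𝔸 𝔹 : Type*} [Category 𝔸] [Category 𝔹] [HasFiniteLimits 𝔹] {V : 𝔸 ⥤ 𝔹}
  (p : VMaltsevOperation V)

lemma papp_comp {T : 𝔹} {A A' : 𝔸} (x y z : T ⟶ V.obj A) (f : A ⟶ A') :
    p.papp x y z ≫ V.map f = p.papp (x ≫ V.map f) (y ≫ V.map f) (z ≫ V.map f) := by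
  rw [papp, papp, Category.assoc, ← p.naturality f, ← Category.assoc]
  congr 1
  ext <;> simp

lemma comp_papp {T T' : 𝔹} {A : 𝔸} (f : T' ⟶ T) (x y z : T ⟶ V.obj A) :
    f ≫ p.papp x y z = p.papp (f ≫ x) (f ≫ y) (f ≫ z) := by
  rw [papp, papp, ← Category.assoc]
  congr 1
  ext <;> simp

@[simp]
lemma papp_self_right {T : 𝔹} {A : 𝔸} (x y : T ⟶ V.obj A) : p.papp x y y = x :=
  p.maltsev_left x y

@[simp]
lemma papp_self_left {T : 𝔹} {A : 𝔸} (x y : T ⟶ V.obj A) : p.papp y y x = x :=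
  p.maltsev_right x y

end VMaltsevOperation

section TwoCellDomain

variable {𝔸 𝔹 : Type*} [Category 𝔸] [Category 𝔹] [HasFiniteLimits 𝔹]
  {V : 𝔸 ⥤ 𝔹} [V.Faithful] (p : VMaltsevOperation V)
  {A A' : 𝔸} {s t : A ⟶ A} {s' t' : A' ⟶ A'} {τ φ : A' ⟶ A}

lemma twoCellDom_comp_source
    (hφ : V.map φ = p.papp (V.map (t' ≫ τ ≫ s)) (V.map (t' ≫ τ)) (V.map τ))
    (hst : t ≫ s = t) (hts : s ≫ t = s) : φ ≫ s = τ ≫ s := by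
  apply V.map_injective
  rw [V.map_comp, hφ, p.papp_comp]
  simp only [← V.map_comp, Category.assoc, comp_self_of_comp_eq hst hts]
  exact p.papp_self_left _ _

lemma source_comp_twoCellDom
    (hφ : V.map φ = p.papp (V.map (t' ≫ τ ≫ s)) (V.map (t' ≫ τ)) (V.map τ))
    (hts' : s' ≫ t' = s') (hτs : s' ≫ τ ≫ s = τ ≫ s) (hφs : φ ≫ s = τ ≫ s) :
    s' ≫ φ = φ ≫ s := by
  apply V.map_injective
  rw [V.map_comp, hφ, p.comp_papp, hφs]
  simp only [← V.map_comp, ← Category.assoc, hts']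
  rw [Category.assoc, hτs, p.papp_self_right]

lemma twoCellDom_comp_target
    (hφ : V.map φ = p.papp (V.map (t' ≫ τ ≫ s)) (V.map (t' ≫ τ)) (V.map τ))
    (hts : s ≫ t = s) (hst' : t' ≫ s' = t') (hts' : s' ≫ t' = s')
    (hτt : t' ≫ τ ≫ t = τ ≫ t) :
    φ ≫ t = t' ≫ φ := by
  apply V.map_injective
  rw [V.map_comp, V.map_comp, hφ, p.papp_comp, p.comp_papp]
  simp only [← V.map_comp, ← Category.assoc, comp_self_of_comp_eq hts' hst']
  simp only [Category.assoc, hts, hτt, p.papp_self_right]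

end TwoCellDomain

theorem dom_of_twoCell_is_morphism_general
    {𝔸 𝔹 : Type*} [Category 𝔸] [Category 𝔹]
    [HasFiniteLimits 𝔹]
    (V : 𝔸 ⥤ 𝔹) [V.Faithful]
    (p : VMaltsevOperation V)
    {A A' : 𝔸} (s t : A ⟶ A) (s' t' : A' ⟶ A')
    (hst : t ≫ s = t) (hts : s ≫ t = s)
    (hst' : t' ≫ s' = t') (hts' : s' ≫ t' = s')
    (τ : A' ⟶ A)
    (hτs : s' ≫ τ ≫ s = τ ≫ s) (hτt : t' ≫ τ ≫ t = τ ≫ t)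
    (φ : A' ⟶ A)
    (hφ : V.map φ = p.papp (V.map (t' ≫ τ ≫ s)) (V.map (t' ≫ τ)) (V.map τ)) :
    φ ≫ s = τ ≫ s ∧ s' ≫ φ = φ ≫ s ∧ φ ≫ t = t' ≫ φ := by
  have hφs := twoCellDom_comp_source p hφ hst hts
  exact ⟨hφs, source_comp_twoCellDom p hφ hts' hτs hφs,
    twoCellDom_comp_target p hφ hts hst' hts' hτt⟩

/-- The domain `φ` of a 2-cell `τ`, defined by `V(φ) = p⟨V(s∘τ∘t'), V(τ∘t'), V(τ)⟩`,
satisfies `s∘φ = s∘τ`, `φ∘s' = s∘φ` and `t∘φ = φ∘t'`; in particular it is a morphism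
`(A',s',t') → (A,s,t)`. -/
theorem dom_of_twoCell_is_morphism
    {𝔸 𝔹 : Type*} [Category 𝔸] [Category 𝔹]
    [HasFiniteLimits 𝔸] [HasFiniteLimits 𝔹]
    (V : 𝔸 ⥤ 𝔹) [V.Faithful] [PreservesFiniteLimits V]
    (p : VMaltsevOperation V)
    {A A' : 𝔸} (s t : A ⟶ A) (s' t' : A' ⟶ A')
    (hst : t ≫ s = t) (hts : s ≫ t = s)
    (hst' : t' ≫ s' = t') (hts' : s' ≫ t' = s')
    (τ : A' ⟶ A)
    (hτs : s' ≫ τ ≫ s = τ ≫ s) (hτt : t' ≫ τ ≫ t = τ ≫ t)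
    (φ : A' ⟶ A)
    (hφ : V.map φ = p.papp (V.map (t' ≫ τ ≫ s)) (V.map (t' ≫ τ)) (V.map τ)) :
    φ ≫ s = τ ≫ s ∧ s' ≫ φ = φ ≫ s ∧ φ ≫ t = t' ≫ φ :=
  dom_of_twoCell_is_morphism_general V p s t s' t' hst hts hst' hts' τ hτs hτt φ hφ
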